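/- Per-iteration load of Coded MapReduce: if every subset S of rK+1 servers requires, for each k ∈ S, a set V of size V₀ = Q·g·C(K−rK, pK−rK)/(K·C(pK, rK)) bits split into rK equal segments, and each of the rK+1 servers in S broadcasts one coded segment of V₀/(rK) bits, then the total bits over all C(K, rK+1) subsets equals (QN/K)(1/r − 1) where N = g·C(K, pK). -/

import Mathlib

/-! Clearing denominators leaves `C(K, m+1)·(m+1)·C(K-m, t-m) = C(K, t)·C(t, m)·(K-m)`.
Absorption turns `C(K, m+1)·(m+1)` into `C(K, m)·(K-m)`, and
`C(K, m)·C(K-m, t-m) = C(K, t)·C(t, m)` since both count an `m`-set inside a `t`-set. -/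

theorem Nat.choose_succ_mul_succ_mul_choose_sub {K t m : ℕ} (hmt : m ≤ t) :
    K.choose (m + 1) * (m + 1) * (K - m).choose (t - m)
      = K.choose t * t.choose m * (K - m) := by
  rw [Nat.choose_succ_right_eq, Nat.mul_right_comm, ← Nat.choose_mul hmt, Nat.mul_right_comm]

theorem cmr_total_load_general (K t m g Q N : ℕ) (hm : 1 ≤ m) (hmt : m ≤ t) (htK : t ≤ K)
    (hN : N = g * K.choose t)
    (V₀ : ℚ) (hV₀ : V₀ = (Q : ℚ) * g * ((K - m).choose (t - m) : ℚ)
      / ((K : ℚ) * (t.choose m : ℚ))) :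
    (K.choose (m + 1) : ℚ) * (m + 1) * V₀ / m
      = ((Q : ℚ) * N / K) * ((K : ℚ) / m - 1) := by
  have hK : (K : ℚ) ≠ 0 := by norm_cast; omega
  have hm₀ : (m : ℚ) ≠ 0 := by norm_cast; omega
  have hchoose : (t.choose m : ℚ) ≠ 0 := by exact_mod_cast (Nat.choose_pos hmt).ne'
  have key : (K.choose (m + 1) : ℚ) * (m + 1) * ((K - m).choose (t - m) : ℚ)
      = K.choose t * t.choose m * ((K : ℚ) - m) := by
    rw [← Nat.cast_sub (hmt.trans htK)]
    exact_mod_cast Nat.choose_succ_mul_succ_mul_choose_sub (K := K) hmt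
  subst hV₀ hN
  push_cast
  field_simp
  linear_combination (Q : ℚ) * g * key

/-- Per-iteration load of Coded MapReduce: with m = rK, t = pK, N = g·C(K,t) and
V₀ = Q·g·C(K−m, t−m)/(K·C(t,m)), the total load C(K, m+1)·(m+1)·V₀/m equals
(QN/K)·(K/m − 1) = (QN/K)(1/r − 1). -/
theorem cmr_total_load (K t m g Q N : ℕ) (hm : 1 ≤ m) (hmt : m ≤ t) (htK : t ≤ K)
    (hg : 1 ≤ g) (hN : N = g * K.choose t) (hQ : K ∣ Q)
    (V₀ : ℚ) (hV₀ : V₀ = (Q : ℚ) * g * ((K - m).choose (t - m) : ℚ)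
      / ((K : ℚ) * (t.choose m : ℚ))) :
    (K.choose (m + 1) : ℚ) * (m + 1) * V₀ / m
      = ((Q : ℚ) * N / K) * ((K : ℚ) / m - 1) :=
  cmr_total_load_general K t m g Q N hm hmt htK hN V₀ hV₀
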